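/- arXiv:1310.2276 — 11 statements merged into one kernel-verified Lean document; each statement's English description precedes it below -/
import Mathlib

section
/- For every integer m, the rational functions 𝒰_m and 𝒱_m are well defined and nonzero as elements of ℂ(y), and the pair {u,v} = {𝒰_m, 𝒱_m} solves the coupled Painlevé-II system; that is, 𝒰_m'' + 2·𝒰_m²·𝒱_m + (1/3)·y·𝒰_m = 0 and 𝒱_m'' + 2·𝒰_m·𝒱_m² + (1/3)·y·𝒱_m = 0 hold as identities in ℂ(y). -/
/-!
The map `(u, v) ↦ (T u, 1 / u)`, with `T u = -(1/6) y u - u'² / u + (1/2) u''`, is a Bäcklund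
transformation of the coupled PII system: it sends solutions with `u ≠ 0` to solutions, and it
lowers the Wronskian `u' v - u v'` by `1/3`. Conjugating it by the exchange `u ↔ v`, which
negates the Wronskian, gives the backward recursion, which raises the Wronskian by `1/3`. The
seed `(1, -y/6)` has Wronskian `1/6`, so `(𝒰_m, 𝒱_m)` has Wronskian `1/6 - m/3`. Since `T u = 0`
would make the new Wronskian `0`, the transformation can only produce a zero from a Wronskian
equal to `1/3` (resp. `-1/3` backward), and `1/6 - m/3 = ±1/3` has no integer solution.

Only the Leibniz rule and `y' = 1` enter, so all of this holds in any differential field of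
characteristic zero; for `ℂ(y)` it remains to see that `rfD` is a derivation.
-/

/-- The derivative on the field `ℂ(y)` of complex rational functions, computed via the
quotient rule applied to the lowest-terms representation `num/denom`. -/
noncomputable def rfD (f : RatFunc ℂ) : RatFunc ℂ :=
  (algebraMap (Polynomial ℂ) (RatFunc ℂ) (Polynomial.derivative f.num) *
      algebraMap (Polynomial ℂ) (RatFunc ℂ) f.denom -
    algebraMap (Polynomial ℂ) (RatFunc ℂ) f.num *
      algebraMap (Polynomial ℂ) (RatFunc ℂ) (Polynomial.derivative f.denom)) /
    algebraMap (Polynomial ℂ) (RatFunc ℂ) f.denom ^ 2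

/-- The pairs `(𝒰_m, 𝒱_m)` for `m = 0, 1, 2, …` via the forward recursion. -/
noncomputable def UVpos : ℕ → RatFunc ℂ × RatFunc ℂ
  | 0 => (1, -RatFunc.X / 6)
  | n + 1 =>
    (-(1 / 6 : RatFunc ℂ) * RatFunc.X * (UVpos n).1 - rfD (UVpos n).1 ^ 2 / (UVpos n).1 +
        (1 / 2 : RatFunc ℂ) * rfD (rfD (UVpos n).1),
      1 / (UVpos n).1)

/-- The pairs `(𝒰_{-m}, 𝒱_{-m})` for `m = 0, 1, 2, …` via the backward recursion. -/
noncomputable def UVneg : ℕ → RatFunc ℂ × RatFunc ℂ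
  | 0 => (1, -RatFunc.X / 6)
  | n + 1 =>
    (1 / (UVneg n).2,
      (1 / 2 : RatFunc ℂ) * rfD (rfD (UVneg n).2) - rfD (UVneg n).2 ^ 2 / (UVneg n).2 -
        (1 / 6 : RatFunc ℂ) * RatFunc.X * (UVneg n).2)

/-- The rational function `𝒰_m ∈ ℂ(y)`, `m ∈ ℤ`. -/
noncomputable def 𝒰 (m : ℤ) : RatFunc ℂ :=
  if 0 ≤ m then (UVpos m.toNat).1 else (UVneg (-m).toNat).1

/-- The rational function `𝒱_m ∈ ℂ(y)`, `m ∈ ℤ`. -/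
noncomputable def 𝒱 (m : ℤ) : RatFunc ℂ :=
  if 0 ≤ m then (UVpos m.toNat).2 else (UVneg (-m).toNat).2

theorem Derivation.map_ofNat {R A M : Type*} [CommSemiring R] [CommSemiring A] [AddCommMonoid M]
    [Algebra R A] [Module A M] [Module R M] (D : Derivation R A M) (n : ℕ) [n.AtLeastTwo] :
    D (no_index (OfNat.ofNat n : A)) = 0 :=
  D.map_natCast n

section CoupledPainleveII

variable {R K : Type*} [CommRing R] [Field K] [Algebra R K] (D : Derivation R K K) (x : K)

def wronskian (u v : K) : K := D u * v - u * D v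

structure IsCoupledPIISolution (u v : K) : Prop where
  eq_fst : D (D u) + 2 * u ^ 2 * v + 1 / 3 * x * u = 0
  eq_snd : D (D v) + 2 * u * v ^ 2 + 1 / 3 * x * v = 0

def darboux (u : K) : K := -(1 / 6) * x * u - D u ^ 2 / u + 1 / 2 * D (D u)

structure IsPIIPair (c u v : K) : Prop where
  fst_ne_zero : u ≠ 0
  snd_ne_zero : v ≠ 0
  solution : IsCoupledPIISolution D x u v
  wronskian_eq : wronskian D u v = c

variable {D x}

theorem wronskian_swap (u v : K) : wronskian D v u = -wronskian D u v := by
  unfold wronskian; ring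

theorem IsCoupledPIISolution.swap {u v : K} (h : IsCoupledPIISolution D x u v) :
    IsCoupledPIISolution D x v u :=
  ⟨by linear_combination h.eq_snd, by linear_combination h.eq_fst⟩

theorem IsPIIPair.swap {c u v : K} (h : IsPIIPair D x c u v) : IsPIIPair D x (-c) v u :=
  ⟨h.snd_ne_zero, h.fst_ne_zero, h.solution.swap, by rw [wronskian_swap, h.wronskian_eq]⟩

variable [CharZero K]

theorem IsCoupledPIISolution.darboux_eq {u v : K} (h : IsCoupledPIISolution D x u v) :
    darboux D x u = -(D u ^ 2 / u + u ^ 2 * v + 1 / 3 * x * u) := by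
  unfold darboux
  linear_combination 1 / 2 * h.eq_fst

theorem IsCoupledPIISolution.darboux_one_div (hx : D x = 1) {u v : K}
    (h : IsCoupledPIISolution D x u v) (hu : u ≠ 0) :
    IsCoupledPIISolution D x (darboux D x u) (1 / u) := by
  have hu'' : D (D u) = -(2 * u ^ 2 * v) - 1 / 3 * x * u := by linear_combination h.eq_fst
  have hv'' : D (D v) = -(2 * u * v ^ 2) - 1 / 3 * x * v := by linear_combination h.eq_snd
  rw [h.darboux_eq]
  constructor
  · simp only [map_add, map_sub, map_neg, Derivation.leibniz, Derivation.leibniz_div,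
      Derivation.leibniz_inv, sq, Derivation.map_ofNat, Derivation.map_one_eq_zero, map_zero, hx,
      smul_eq_mul, hu'', hv'']
    field_simp
    ring
  · simp only [map_sub, Derivation.leibniz, Derivation.leibniz_div, Derivation.leibniz_inv, sq,
      Derivation.map_one_eq_zero, map_zero, smul_eq_mul, hu'']
    field_simp
    ring

theorem IsCoupledPIISolution.wronskian_darboux_one_div (hx : D x = 1) {u v : K}
    (h : IsCoupledPIISolution D x u v) (hu : u ≠ 0) :
    wronskian D (darboux D x u) (1 / u) = wronskian D u v - 1 / 3 := by
  have hu'' : D (D u) = -(2 * u ^ 2 * v) - 1 / 3 * x * u := by linear_combination h.eq_fst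
  rw [h.darboux_eq, wronskian, wronskian]
  simp only [map_add, map_neg, Derivation.leibniz, Derivation.leibniz_div, sq,
    Derivation.map_ofNat, Derivation.map_one_eq_zero, hx, smul_eq_mul, hu'']
  field_simp
  ring

theorem darboux_ne_zero_of_wronskian_ne (hx : D x = 1) {u v : K}
    (h : IsCoupledPIISolution D x u v) (hu : u ≠ 0) (hc : wronskian D u v ≠ 1 / 3) :
    darboux D x u ≠ 0 := by
  intro h0
  have hw := h.wronskian_darboux_one_div hx hu
  rw [h0, wronskian, map_zero, zero_mul, zero_mul, sub_zero] at hw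
  exact hc (sub_eq_zero.mp hw.symm)

namespace IsPIIPair

variable {c u v : K}

theorem darboux_one_div (hx : D x = 1) (h : IsPIIPair D x c u v) (hc : c ≠ 1 / 3) :
    IsPIIPair D x (c - 1 / 3) (darboux D x u) (1 / u) where
  fst_ne_zero :=
    darboux_ne_zero_of_wronskian_ne hx h.solution h.fst_ne_zero (h.wronskian_eq ▸ hc)
  snd_ne_zero := one_div_ne_zero h.fst_ne_zero
  solution := h.solution.darboux_one_div hx h.fst_ne_zero
  wronskian_eq := by rw [h.solution.wronskian_darboux_one_div hx h.fst_ne_zero, h.wronskian_eq]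

theorem one_div_darboux (hx : D x = 1) (h : IsPIIPair D x c u v) (hc : c ≠ -1 / 3) :
    IsPIIPair D x (c + 1 / 3) (1 / v) (darboux D x v) := by
  have hc' : -c ≠ 1 / 3 := fun h' ↦ hc (by linear_combination -h')
  simpa [sub_eq_add_neg, add_comm] using (h.swap.darboux_one_div hx hc').swap

end IsPIIPair

theorem isPIIPair_one (hx : D x = 1) : IsPIIPair D x (1 / 6) 1 (-x / 6) := by
  have hx0 : x ≠ 0 := by rintro rfl; simp at hx
  refine ⟨one_ne_zero, by simpa using hx0, ⟨?_, ?_⟩, ?_⟩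
  · simp only [Derivation.map_one_eq_zero, map_zero]
    ring
  · simp only [Derivation.leibniz_div_const _ _ _ (D.map_ofNat 6), map_neg, hx, smul_eq_mul,
      mul_neg, mul_one, Derivation.leibniz_inv, Derivation.map_ofNat, mul_zero, neg_zero]
    ring
  · simp only [wronskian, Derivation.leibniz_div_const _ _ _ (D.map_ofNat 6), map_neg,
      Derivation.map_one_eq_zero, hx, smul_eq_mul]
    ring

end CoupledPainleveII

section RationalFunctions

open Polynomial

local notation "ι" => algebraMap ℂ[X] (RatFunc ℂ)

theorem rfD_algebraMap_div (p : ℂ[X]) {q : ℂ[X]} (hq : q ≠ 0) :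
    rfD (ι p / ι q) = (ι (derivative p) * ι q - ι p * ι (derivative q)) / ι q ^ 2 := by
  set f := ι p / ι q
  have hq' : ι q ≠ 0 := RatFunc.algebraMap_ne_zero hq
  have hd : ι f.denom ≠ 0 := RatFunc.algebraMap_ne_zero f.denom_ne_zero
  have hcross : ι f.num * ι q = ι p * ι f.denom := by
    rw [← div_eq_div_iff hd hq', RatFunc.num_div_denom]
  have hcross' : f.num * q = p * f.denom := by
    apply RatFunc.algebraMap_injective ℂ
    simpa only [map_mul] using hcross
  have hderiv : ι (derivative f.num) * ι q + ι f.num * ι (derivative q) =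
      ι (derivative p) * ι f.denom + ι p * ι (derivative f.denom) := by
    simpa only [derivative_mul, map_add, map_mul] using
      congrArg (fun r ↦ ι (derivative r)) hcross'
  rw [rfD, div_eq_div_iff (pow_ne_zero 2 hd) (pow_ne_zero 2 hq')]
  linear_combination (ι f.denom * ι q) * hderiv -
    (ι f.denom * ι (derivative q) + ι (derivative f.denom) * ι q) * hcross

theorem rfD_add (f g : RatFunc ℂ) : rfD (f + g) = rfD f + rfD g := by
  induction f using RatFunc.induction_on with | f p₁ q₁ hq₁ => ?_
  induction g using RatFunc.induction_on with | f p₂ q₂ hq₂ => ?_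
  have h₁ : ι q₁ ≠ 0 := RatFunc.algebraMap_ne_zero hq₁
  have h₂ : ι q₂ ≠ 0 := RatFunc.algebraMap_ne_zero hq₂
  rw [div_add_div _ _ h₁ h₂, ← map_mul, ← map_mul, ← map_mul, ← map_add,
    rfD_algebraMap_div _ (mul_ne_zero hq₁ hq₂), rfD_algebraMap_div _ hq₁, rfD_algebraMap_div _ hq₂]
  simp only [derivative_mul, map_add, map_mul]
  field_simp
  ring

theorem rfD_mul (f g : RatFunc ℂ) : rfD (f * g) = rfD f * g + f * rfD g := by
  induction f using RatFunc.induction_on with | f p₁ q₁ hq₁ => ?_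
  induction g using RatFunc.induction_on with | f p₂ q₂ hq₂ => ?_
  have h₁ : ι q₁ ≠ 0 := RatFunc.algebraMap_ne_zero hq₁
  have h₂ : ι q₂ ≠ 0 := RatFunc.algebraMap_ne_zero hq₂
  rw [div_mul_div_comm, ← map_mul, ← map_mul,
    rfD_algebraMap_div _ (mul_ne_zero hq₁ hq₂), rfD_algebraMap_div _ hq₁, rfD_algebraMap_div _ hq₂]
  simp only [derivative_mul, map_add, map_mul]
  field_simp
  ring

theorem rfD_algebraMap (p : ℂ[X]) : rfD (ι p) = ι (derivative p) := by
  simpa using rfD_algebraMap_div p one_ne_zero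

theorem rfD_X : rfD RatFunc.X = 1 := by
  simpa using rfD_algebraMap X

theorem rfD_smul (c : ℂ) (f : RatFunc ℂ) : rfD (c • f) = c • rfD f := by
  have hc : rfD (algebraMap ℂ (RatFunc ℂ) c) = 0 := by
    simpa using rfD_algebraMap (Polynomial.C c)
  rw [Algebra.smul_def, Algebra.smul_def, rfD_mul, hc, zero_mul, zero_add]

end RationalFunctions

noncomputable def rfDerivation : Derivation ℂ (RatFunc ℂ) (RatFunc ℂ) where
  toFun := rfD
  map_add' := rfD_add
  map_smul' := rfD_smul
  map_one_eq_zero' := by simpa using rfD_mul 1 1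
  leibniz' f g := by
    change rfD (f * g) = f * rfD g + g * rfD f
    rw [rfD_mul]
    ring

theorem rfDerivation_apply (f : RatFunc ℂ) : rfDerivation f = rfD f := rfl

theorem rfDerivation_X : rfDerivation RatFunc.X = 1 := rfD_X

theorem isPIIPair_UVpos (n : ℕ) :
    IsPIIPair rfDerivation RatFunc.X (1 / 6 - n / 3) (UVpos n).1 (UVpos n).2 := by
  induction n with
  | zero => simpa only [UVpos, Nat.cast_zero, zero_div, sub_zero] using
    isPIIPair_one rfDerivation_X
  | succ n ih =>
    have hc : (1 / 6 - n / 3 : RatFunc ℂ) ≠ 1 / 3 := by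
      intro h
      have h' : ((2 * n + 1 : ℕ) : RatFunc ℂ) = 0 := by push_cast; linear_combination -6 * h
      exact absurd (Nat.cast_eq_zero.mp h') (by omega)
    have hstep : UVpos (n + 1) = (darboux rfDerivation RatFunc.X (UVpos n).1, 1 / (UVpos n).1) :=
      rfl
    rw [hstep]
    convert ih.darboux_one_div rfDerivation_X hc using 1
    push_cast
    ring

theorem isPIIPair_UVneg (n : ℕ) :
    IsPIIPair rfDerivation RatFunc.X (1 / 6 + n / 3) (UVneg n).1 (UVneg n).2 := by
  induction n with
  | zero => simpa only [UVneg, Nat.cast_zero, zero_div, add_zero] using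
    isPIIPair_one rfDerivation_X
  | succ n ih =>
    have hc : (1 / 6 + n / 3 : RatFunc ℂ) ≠ -1 / 3 := by
      intro h
      have h' : ((2 * n + 3 : ℕ) : RatFunc ℂ) = 0 := by push_cast; linear_combination 6 * h
      exact absurd (Nat.cast_eq_zero.mp h') (by omega)
    have hstep : UVneg (n + 1) = (1 / (UVneg n).2, darboux rfDerivation RatFunc.X (UVneg n).2) := by
      rw [UVneg, darboux, rfDerivation_apply, rfDerivation_apply]
      congr 1
      ring
    rw [hstep]
    convert ih.one_div_darboux rfDerivation_X hc using 1
    push_cast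
    ring

theorem exists_isPIIPair_𝒰_𝒱 (m : ℤ) :
    ∃ c, IsPIIPair rfDerivation RatFunc.X c (𝒰 m) (𝒱 m) := by
  rcases le_or_gt 0 m with hm | hm
  · rw [𝒰, 𝒱, if_pos hm, if_pos hm]
    exact ⟨_, isPIIPair_UVpos _⟩
  · rw [𝒰, 𝒱, if_neg hm.not_ge, if_neg hm.not_ge]
    exact ⟨_, isPIIPair_UVneg _⟩

/-- For every integer `m`, the rational functions `𝒰_m` and `𝒱_m` are nonzero elements of
`ℂ(y)`, and the pair `{u,v} = {𝒰_m, 𝒱_m}` solves the coupled Painlevé-II system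
`u'' + 2u²v + (1/3)yu = 0`, `v'' + 2uv² + (1/3)yv = 0` as identities in `ℂ(y)`. -/
theorem rational_coupled_PII_system (m : ℤ) :
    𝒰 m ≠ 0 ∧ 𝒱 m ≠ 0 ∧
      rfD (rfD (𝒰 m)) + 2 * 𝒰 m ^ 2 * 𝒱 m + (1 / 3 : RatFunc ℂ) * RatFunc.X * 𝒰 m = 0 ∧
      rfD (rfD (𝒱 m)) + 2 * 𝒰 m * 𝒱 m ^ 2 + (1 / 3 : RatFunc ℂ) * RatFunc.X * 𝒱 m = 0 := by
  obtain ⟨c, h⟩ := exists_isPIIPair_𝒰_𝒱 m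
  exact ⟨h.fst_ne_zero, h.snd_ne_zero, h.solution.eq_fst, h.solution.eq_snd⟩
end

section
/- Suppose u and v solve the coupled Painlevé-II system on D. Then ν := v·u' − u·v' is constant on D, and the product w := u·v satisfies the Painlevé-XXXIV equation: at every point y ∈ D with w(y) ≠ 0, w''(y) = w'(y)²/(2·w(y)) − 4·w(y)² − (2/3)·y·w(y) − ν²/(2·w(y)). -/
/-!
Differentiating `ν = v u' − u v'` gives `v u'' − u v''`, in which the nonlinear and the `y`-terms
of the two equations cancel, so `ν` is constant on the connected set `D`. For `w = u v` one has
`w'' = u'' v + 2 u' v' + u v''`, and the cross term is recovered from `w'` and `ν` through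
`(w')² − ν² = 4 w u' v'`; substituting the equations for `u''` and `v''` gives Painlevé XXXIV.
-/

open Filter Topology

section Calculus

variable {𝕜 : Type*} [NontriviallyNormedField 𝕜] {u v : 𝕜 → 𝕜} {y : 𝕜}

theorem deriv_mul_deriv_sub_mul_deriv (hu : DifferentiableAt 𝕜 u y) (hv : DifferentiableAt 𝕜 v y)
    (hu' : DifferentiableAt 𝕜 (deriv u) y) (hv' : DifferentiableAt 𝕜 (deriv v) y) :
    deriv (fun t => v t * deriv u t - u t * deriv v t) y =
      v y * deriv (deriv u) y - u y * deriv (deriv v) y := by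
  rw [deriv_fun_sub (hv.fun_mul hu') (hu.fun_mul hv'), deriv_fun_mul hv hu', deriv_fun_mul hu hv']
  ring

theorem deriv_deriv_mul (hu : ∀ᶠ t in 𝓝 y, DifferentiableAt 𝕜 u t)
    (hv : ∀ᶠ t in 𝓝 y, DifferentiableAt 𝕜 v t)
    (hu' : DifferentiableAt 𝕜 (deriv u) y) (hv' : DifferentiableAt 𝕜 (deriv v) y) :
    deriv (deriv fun t => u t * v t) y =
      deriv (deriv u) y * v y + 2 * (deriv u y * deriv v y) + u y * deriv (deriv v) y := by
  have hderiv : deriv (fun t => u t * v t) =ᶠ[𝓝 y] fun t => deriv u t * v t + u t * deriv v t := by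
    filter_upwards [hu, hv] with t hut hvt using deriv_mul hut hvt
  rw [hderiv.deriv_eq, deriv_fun_add (hu'.fun_mul hv.self_of_nhds) (hu.self_of_nhds.fun_mul hv'),
    deriv_fun_mul hu' hv.self_of_nhds, deriv_fun_mul hu.self_of_nhds hv']
  ring

end Calculus

theorem painleveXXXIV_of_coupled_painleveII {K : Type*} [Field K] [NeZero (2 : K)]
    {u v u' v' u'' v'' y : K} (huv : u * v ≠ 0)
    (hu'' : u'' + 2 * u ^ 2 * v + (1 / 3) * y * u = 0)
    (hv'' : v'' + 2 * u * v ^ 2 + (1 / 3) * y * v = 0) :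
    u'' * v + 2 * (u' * v') + u * v'' =
      (u' * v + u * v') ^ 2 / (2 * (u * v)) - 4 * (u * v) ^ 2 - (2 / 3) * y * (u * v) -
        (v * u' - u * v') ^ 2 / (2 * (u * v)) := by
  have hcross : (u' * v + u * v') ^ 2 / (2 * (u * v)) - (v * u' - u * v') ^ 2 / (2 * (u * v)) =
      2 * (u' * v') := by
    rw [← sub_div, div_eq_iff (mul_ne_zero two_ne_zero huv)]
    ring
  linear_combination v * hu'' + u * hv'' - hcross

theorem coupled_PII_gives_PXXXIV_general (D : Set ℂ) (hD : IsOpen D)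
    (hconn : IsPreconnected D) (u v : ℂ → ℂ)
    (hu : AnalyticOnNhd ℂ u D) (hv : AnalyticOnNhd ℂ v D)
    (hueq : ∀ y ∈ D, deriv (deriv u) y + 2 * u y ^ 2 * v y + (1 / 3) * y * u y = 0)
    (hveq : ∀ y ∈ D, deriv (deriv v) y + 2 * u y * v y ^ 2 + (1 / 3) * y * v y = 0) :
    ∃ ν : ℂ,
      (∀ y ∈ D, v y * deriv u y - u y * deriv v y = ν) ∧
      (∀ y ∈ D, u y * v y ≠ 0 →
        deriv (deriv fun t => u t * v t) y =
          (deriv (fun t => u t * v t) y) ^ 2 / (2 * (u y * v y)) - 4 * (u y * v y) ^ 2 -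
            (2 / 3) * y * (u y * v y) - ν ^ 2 / (2 * (u y * v y))) := by
  have hu' := hu.deriv
  have hv' := hv.deriv
  obtain ⟨ν, hν⟩ : ∃ ν, ∀ y ∈ D, v y * deriv u y - u y * deriv v y = ν := by
    refine hD.exists_is_const_of_deriv_eq_zero hconn
      ((hv.mul hu').sub (hu.mul hv')).differentiableOn fun y hy => ?_
    rw [deriv_mul_deriv_sub_mul_deriv (hu y hy).differentiableAt (hv y hy).differentiableAt
      (hu' y hy).differentiableAt (hv' y hy).differentiableAt]
    simp only [Pi.zero_apply]
    linear_combination v y * hueq y hy - u y * hveq y hy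
  refine ⟨ν, hν, fun y hy hw => ?_⟩
  have hnear : ∀ᶠ t in 𝓝 y, t ∈ D := hD.mem_nhds hy
  rw [deriv_deriv_mul (hnear.mono fun t ht => (hu t ht).differentiableAt)
      (hnear.mono fun t ht => (hv t ht).differentiableAt)
      (hu' y hy).differentiableAt (hv' y hy).differentiableAt,
    deriv_fun_mul (hu y hy).differentiableAt (hv y hy).differentiableAt, ← hν y hy]
  exact painleveXXXIV_of_coupled_painleveII hw (hueq y hy) (hveq y hy)

/-- Suppose `u` and `v` are analytic on a nonempty open connected set `D ⊆ ℂ` and solve the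
coupled Painlevé-II system `u'' + 2u²v + (1/3)yu = 0`, `v'' + 2uv² + (1/3)yv = 0` on `D`.
Then `ν := v·u' − u·v'` is constant on `D`, and the product `w := u·v` satisfies the
Painlevé-XXXIV equation `w'' = (w')²/(2w) − 4w² − (2/3)yw − ν²/(2w)` at every point of `D`
where `w` does not vanish. -/
theorem coupled_PII_gives_PXXXIV (D : Set ℂ) (hD : IsOpen D) (hne : D.Nonempty)
    (hconn : IsPreconnected D) (u v : ℂ → ℂ)
    (hu : AnalyticOnNhd ℂ u D) (hv : AnalyticOnNhd ℂ v D)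
    (hueq : ∀ y ∈ D, deriv (deriv u) y + 2 * u y ^ 2 * v y + (1 / 3) * y * u y = 0)
    (hveq : ∀ y ∈ D, deriv (deriv v) y + 2 * u y * v y ^ 2 + (1 / 3) * y * v y = 0) :
    ∃ ν : ℂ,
      (∀ y ∈ D, v y * deriv u y - u y * deriv v y = ν) ∧
      (∀ y ∈ D, u y * v y ≠ 0 →
        deriv (deriv fun t => u t * v t) y =
          (deriv (fun t => u t * v t) y) ^ 2 / (2 * (u y * v y)) - 4 * (u y * v y) ^ 2 -
            (2 / 3) * y * (u y * v y) - ν ^ 2 / (2 * (u y * v y))) :=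
  coupled_PII_gives_PXXXIV_general D hD hconn u v hu hv hueq hveq
end

section
/- Suppose u and v solve the coupled Painlevé-II system on D, and let ν denote the constant value of v·u' − u·v' on D. Then the logarithmic derivative p := u'/u satisfies an inhomogeneous Painlevé-II equation: at every point y ∈ D with u(y) ≠ 0, p''(y) = 2·p(y)³ + (2/3)·y·p(y) + 2·ν − 1/3. -/
/-!
The logarithmic derivative `p = u'/u` of a solution of `u'' + q u = 0` satisfies the Riccati
equation `p' = -q - p²`; here `q = 2uv + y/3`. Differentiating once more,
`p'' = -2(u'v + uv') - 1/3 + 2p(q + p²)`, and since `p u = u'` the term `4puv` turns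
`-2(u'v + uv')` into `2(vu' - uv') = 2ν`.
-/

open Filter Topology

section LogDeriv

variable {𝕜 : Type*} [NontriviallyNormedField 𝕜] {f : 𝕜 → 𝕜} {x : 𝕜}

theorem deriv_logDeriv (hf : DifferentiableAt 𝕜 f x) (hf' : DifferentiableAt 𝕜 (deriv f) x)
    (h0 : f x ≠ 0) :
    deriv (logDeriv f) x = deriv (deriv f) x / f x - logDeriv f x ^ 2 := by
  change deriv (fun t => deriv f t / f t) x = _
  rw [deriv_fun_div hf' hf h0, logDeriv_apply]
  field_simp

theorem deriv_logDeriv_of_deriv_deriv_add_mul_eq_zero {q : 𝕜}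
    (hf : DifferentiableAt 𝕜 f x) (hf' : DifferentiableAt 𝕜 (deriv f) x) (h0 : f x ≠ 0)
    (h : deriv (deriv f) x + q * f x = 0) :
    deriv (logDeriv f) x = -q - logDeriv f x ^ 2 := by
  rw [deriv_logDeriv hf hf' h0, eq_neg_of_add_eq_zero_left h, neg_div, mul_div_cancel_right₀ _ h0]

end LogDeriv

theorem coupled_PII_log_derivative_PII_general (D : Set ℂ) (hD : IsOpen D) (u v : ℂ → ℂ)
    (hu : AnalyticOnNhd ℂ u D) (hv : AnalyticOnNhd ℂ v D)
    (hueq : ∀ y ∈ D, deriv (deriv u) y + 2 * u y ^ 2 * v y + (1 / 3) * y * u y = 0)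
    (ν : ℂ) (hν : ∀ y ∈ D, v y * deriv u y - u y * deriv v y = ν) :
    ∀ y ∈ D, u y ≠ 0 →
      deriv (deriv fun t => deriv u t / u t) y =
        2 * (deriv u y / u y) ^ 3 + (2 / 3) * y * (deriv u y / u y) + 2 * ν - 1 / 3 := by
  intro y hy huy
  have riccati : ∀ t ∈ D, u t ≠ 0 →
      deriv (logDeriv u) t = -(2 * u t * v t + t / 3) - logDeriv u t ^ 2 := fun t ht hut =>
    deriv_logDeriv_of_deriv_deriv_add_mul_eq_zero (hu t ht).differentiableAt
      (hu.deriv t ht).differentiableAt hut (by linear_combination hueq t ht)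
  have riccati_near : deriv (logDeriv u) =ᶠ[𝓝 y]
      fun t => -(2 * u t * v t + t / 3) - logDeriv u t ^ 2 := by
    filter_upwards [hD.mem_nhds hy, (hu y hy).continuousAt.eventually_ne huy] with t ht hut
    exact riccati t ht hut
  have hu' := (hu y hy).differentiableAt.hasDerivAt
  have hv' := (hv y hy).differentiableAt.hasDerivAt
  have hp' : HasDerivAt (logDeriv u) (deriv (logDeriv u) y) y :=
    ((hu.deriv y hy).differentiableAt.div (hu y hy).differentiableAt huy).hasDerivAt
  have hp'' := (((hu'.const_mul 2).fun_mul hv').fun_add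
    ((hasDerivAt_id' y).div_const 3)).fun_neg.fun_sub (hp'.fun_pow 2)
    |>.congr_of_eventuallyEq riccati_near
  change deriv (deriv (logDeriv u)) y = _
  have hpu : deriv u y / u y * u y = deriv u y := div_mul_cancel₀ _ huy
  rw [hp''.deriv, riccati y hy huy, logDeriv_apply, ← hν y hy]
  linear_combination (4 * v y) * hpu

/-- Suppose `u` and `v` are analytic on a nonempty open connected set `D ⊆ ℂ` and solve the
coupled Painlevé-II system `u'' + 2u²v + (1/3)yu = 0`, `v'' + 2uv² + (1/3)yv = 0` on `D`,
and let `ν` denote the constant value of `v·u' − u·v'` on `D`.  Then the logarithmic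
derivative `p := u'/u` satisfies the inhomogeneous Painlevé-II equation
`p'' = 2p³ + (2/3)yp + 2ν − 1/3` at every point of `D` where `u` does not vanish. -/
theorem coupled_PII_log_derivative_PII (D : Set ℂ) (hD : IsOpen D) (hne : D.Nonempty)
    (hconn : IsPreconnected D) (u v : ℂ → ℂ)
    (hu : AnalyticOnNhd ℂ u D) (hv : AnalyticOnNhd ℂ v D)
    (hueq : ∀ y ∈ D, deriv (deriv u) y + 2 * u y ^ 2 * v y + (1 / 3) * y * u y = 0)
    (hveq : ∀ y ∈ D, deriv (deriv v) y + 2 * u y * v y ^ 2 + (1 / 3) * y * v y = 0)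
    (ν : ℂ) (hν : ∀ y ∈ D, v y * deriv u y - u y * deriv v y = ν) :
    ∀ y ∈ D, u y ≠ 0 →
      deriv (deriv fun t => deriv u t / u t) y =
        2 * (deriv u y / u y) ^ 3 + (2 / 3) * y * (deriv u y / u y) + 2 * ν - 1 / 3 :=
  coupled_PII_log_derivative_PII_general D hD u v hu hv hueq ν hν
end

section
/- For every integer m, the identities 𝒰_{−m} = 1/𝒰_m and 𝒱_{1−m} = 1/𝒱_{m+1} hold in ℂ(y). -/
/-! Both recursions iterate the same map `u ↦ -(y/6) u - (u')²/u + u''/2`, and it sends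
`𝒰₀ = 1` to `𝒱₀ = -y/6`. Hence the backward `𝒱`-sequence is the forward `𝒰`-sequence shifted by
one, `𝒱_{-n} = 𝒰_{n+1}`, and inverting gives `𝒰_{-n} = 1/𝒰_n`. Together with `𝒱_{n+1} = 1/𝒰_n`
this yields `𝒱_{m+1} = 1/𝒰_m` for all integers `m`, from which both identities follow. -/

noncomputable def pIIStep (u : RatFunc ℂ) : RatFunc ℂ :=
  -(1 / 6 : RatFunc ℂ) * RatFunc.X * u - rfD u ^ 2 / u + (1 / 2 : RatFunc ℂ) * rfD (rfD u)

lemma rfD_one : rfD (1 : RatFunc ℂ) = 0 := by simp [rfD]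

lemma rfD_zero : rfD (0 : RatFunc ℂ) = 0 := by simp [rfD]

lemma pIIStep_one : pIIStep 1 = -RatFunc.X / 6 := by
  rw [pIIStep, rfD_one, rfD_zero]
  ring

lemma UVpos_succ_fst (n : ℕ) : (UVpos (n + 1)).1 = pIIStep (UVpos n).1 := rfl

lemma UVpos_succ_snd (n : ℕ) : (UVpos (n + 1)).2 = 1 / (UVpos n).1 := rfl

lemma UVneg_succ_fst (n : ℕ) : (UVneg (n + 1)).1 = 1 / (UVneg n).2 := rfl

lemma UVneg_succ_snd (n : ℕ) : (UVneg (n + 1)).2 = pIIStep (UVneg n).2 := by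
  simp only [UVneg, pIIStep]
  ring

lemma UVneg_snd_eq_UVpos_succ_fst (n : ℕ) : (UVneg n).2 = (UVpos (n + 1)).1 := by
  induction n with
  | zero => exact pIIStep_one.symm
  | succ n ih => rw [UVneg_succ_snd, ih, UVpos_succ_fst (n + 1)]

lemma UVneg_fst_eq_one_div_UVpos_fst (n : ℕ) : (UVneg n).1 = 1 / (UVpos n).1 := by
  cases n with
  | zero => simp [UVneg, UVpos]
  | succ n => rw [UVneg_succ_fst, UVneg_snd_eq_UVpos_succ_fst]

lemma 𝒰_natCast (n : ℕ) : 𝒰 n = (UVpos n).1 := by simp [𝒰]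

lemma 𝒱_natCast (n : ℕ) : 𝒱 n = (UVpos n).2 := by simp [𝒱]

lemma 𝒰_neg_natCast (n : ℕ) : 𝒰 (-n) = (UVneg n).1 := by
  cases n with
  | zero => simp [𝒰, UVneg, UVpos]
  | succ n => rw [𝒰, if_neg (by omega), neg_neg, Int.toNat_natCast]

lemma 𝒱_neg_natCast (n : ℕ) : 𝒱 (-n) = (UVneg n).2 := by
  cases n with
  | zero => simp [𝒱, UVneg, UVpos]
  | succ n => rw [𝒱, if_neg (by omega), neg_neg, Int.toNat_natCast]

lemma 𝒰_neg (m : ℤ) : 𝒰 (-m) = 1 / 𝒰 m := by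
  have h (n : ℕ) : 𝒰 (-n) = 1 / 𝒰 n := by
    rw [𝒰_neg_natCast, 𝒰_natCast, UVneg_fst_eq_one_div_UVpos_fst]
  obtain ⟨n, rfl | rfl⟩ := Int.eq_nat_or_neg m
  · exact h n
  · rw [neg_neg, h, one_div_one_div]

lemma 𝒱_add_one (m : ℤ) : 𝒱 (m + 1) = 1 / 𝒰 m := by
  cases m with
  | ofNat n =>
    rw [Int.ofNat_eq_natCast, ← Nat.cast_succ, 𝒱_natCast, 𝒰_natCast, UVpos_succ_snd]
  | negSucc n =>
    rw [Int.negSucc_eq, show -((n : ℤ) + 1) + 1 = -n by ring, 𝒱_neg_natCast, 𝒰_neg,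
      one_div_one_div, UVneg_snd_eq_UVpos_succ_fst, ← 𝒰_natCast, Nat.cast_succ]

/-- For every integer `m`, the identities `𝒰_{−m} = 1/𝒰_m` and `𝒱_{1−m} = 1/𝒱_{m+1}`
hold in `ℂ(y)`. -/
theorem rational_PII_reflection (m : ℤ) :
    𝒰 (-m) = 1 / 𝒰 m ∧ 𝒱 (1 - m) = 1 / 𝒱 (m + 1) := by
  refine ⟨𝒰_neg m, ?_⟩
  rw [show 1 - m = -m + 1 by ring, 𝒱_add_one, 𝒱_add_one, 𝒰_neg]
end

section
/- Let x₀, S, Δ ∈ ℂ satisfy 6·S² + 3·Δ² = −8·x₀ and 3·S·Δ² = 16, and set Π := S²·(S² − Δ²)/16. Then: (i) S satisfies the cubic equation 3·S³ + 4·x₀·S + 8 = 0; (ii) the quartic factorizes as z⁴ + (2/3)·x₀·z² − (4/3)·z + Π = (z − (S−Δ)/2)·(z − (S+Δ)/2)·(z + S/2)² for all z ∈ ℂ; and (iii) the value p = −S/2 is a double root of this quartic and satisfies 2·p³ + (2/3)·x₀·p − 2/3 = 0, so the constant function p ≡ −S/2 solves both the first-order equation (p')² = p⁴ + (2/3)·x₀·p²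 − (4/3)·p + Π and the autonomous model Painlevé-II equation p'' = 2·p³ + (2/3)·x₀·p − 2/3. -/
/-!
The right-hand side `(z - (S-Δ)/2)(z - (S+Δ)/2)(z + S/2)²` is a quartic with no cubic term whose
`z²`- and `z`-coefficients are `-(2S² + Δ²)/4` and `-SΔ²/4`; the two hypotheses say exactly that
these are `(2/3)x₀` and `-4/3`, which gives the factorization. The point `p = -S/2` is then a
double root, so the derivative `4p³ + (4/3)x₀p - 4/3` of the quartic vanishes there; halved, this
is the stationary model Painlevé-II equation for `p`, and multiplied out it is the cubic for `S`.
A constant solves both differential equations because both right-hand sides vanish at `p`.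
-/

noncomputable def boutrouxQuartic (x₀ c z : ℂ) : ℂ :=
  z ^ 4 + (2 / 3) * x₀ * z ^ 2 - (4 / 3) * z + c

theorem hasDerivAt_boutrouxQuartic (x₀ c z : ℂ) :
    HasDerivAt (boutrouxQuartic x₀ c) (4 * z ^ 3 + (4 / 3) * x₀ * z - 4 / 3) z :=
  ((((hasDerivAt_pow 4 z).fun_add ((hasDerivAt_pow 2 z).const_mul ((2 / 3) * x₀))).fun_sub
    ((hasDerivAt_id' z).const_mul (4 / 3))).add_const c).congr_deriv (by norm_num; ring)

theorem hasDerivAt_mul_sub_sq_self {𝕜 : Type*} [NontriviallyNormedField 𝕜] {g : 𝕜 → 𝕜} {c : 𝕜}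
    (hg : DifferentiableAt 𝕜 g c) : HasDerivAt (fun z => g z * (z - c) ^ 2) 0 c :=
  (hg.hasDerivAt.fun_mul (((hasDerivAt_id' c).sub_const c).fun_pow 2)).congr_deriv (by simp)

theorem factored_quartic_expand {K : Type*} [Field K] [CharZero K] (S Δ z : K) :
    (z - (S - Δ) / 2) * (z - (S + Δ) / 2) * (z + S / 2) ^ 2 =
      z ^ 4 + (-(2 * S ^ 2 + Δ ^ 2) / 4) * z ^ 2 + (-(S * Δ ^ 2) / 4) * z +
        S ^ 2 * (S ^ 2 - Δ ^ 2) / 16 := by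
  ring

theorem boutrouxQuartic_eq_mul {x₀ S Δ : ℂ}
    (h1 : 6 * S ^ 2 + 3 * Δ ^ 2 = -8 * x₀) (h2 : 3 * S * Δ ^ 2 = 16) (z : ℂ) :
    boutrouxQuartic x₀ (S ^ 2 * (S ^ 2 - Δ ^ 2) / 16) z =
      (z - (S - Δ) / 2) * (z - (S + Δ) / 2) * (z + S / 2) ^ 2 := by
  have hz2 : -(2 * S ^ 2 + Δ ^ 2) / 4 = (2 / 3) * x₀ := by linear_combination -h1 / 12
  have hz1 : -(S * Δ ^ 2) / 4 = -(4 / 3) := by linear_combination -h2 / 12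
  rw [factored_quartic_expand, hz2, hz1, boutrouxQuartic]
  ring

/-- Genus-zero (degenerate) case of the Boutroux ansatz.  If `6S² + 3Δ² = −8x₀` and
`3SΔ² = 16`, and `Π := S²(S² − Δ²)/16`, then: (i) `3S³ + 4x₀S + 8 = 0`; (ii) the quartic
`z⁴ + (2/3)x₀z² − (4/3)z + Π` factorizes as `(z − (S−Δ)/2)(z − (S+Δ)/2)(z + S/2)²`;
(iii) `p = −S/2` is a double root of the quartic and satisfies
`2p³ + (2/3)x₀p − 2/3 = 0`, so the constant function `p ≡ −S/2` solves both
`(p')² = p⁴ + (2/3)x₀p² − (4/3)p + Π` and `p'' = 2p³ + (2/3)x₀p − 2/3`. -/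
theorem boutroux_genus_zero (x₀ S Δ : ℂ)
    (h1 : 6 * S ^ 2 + 3 * Δ ^ 2 = -8 * x₀) (h2 : 3 * S * Δ ^ 2 = 16) :
    (3 * S ^ 3 + 4 * x₀ * S + 8 = 0) ∧
    (∀ z : ℂ,
      z ^ 4 + (2 / 3) * x₀ * z ^ 2 - (4 / 3) * z + S ^ 2 * (S ^ 2 - Δ ^ 2) / 16 =
        (z - (S - Δ) / 2) * (z - (S + Δ) / 2) * (z + S / 2) ^ 2) ∧
    ((-S / 2) ^ 4 + (2 / 3) * x₀ * (-S / 2) ^ 2 - (4 / 3) * (-S / 2) +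
        S ^ 2 * (S ^ 2 - Δ ^ 2) / 16 = 0 ∧
      4 * (-S / 2) ^ 3 + (4 / 3) * x₀ * (-S / 2) - 4 / 3 = 0) ∧
    (2 * (-S / 2) ^ 3 + (2 / 3) * x₀ * (-S / 2) - 2 / 3 = 0) ∧
    (∀ w : ℂ,
      (deriv (fun _ : ℂ => -S / 2) w) ^ 2 =
        (-S / 2) ^ 4 + (2 / 3) * x₀ * (-S / 2) ^ 2 - (4 / 3) * (-S / 2) +
          S ^ 2 * (S ^ 2 - Δ ^ 2) / 16) ∧
    (∀ w : ℂ,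
      deriv (deriv fun _ : ℂ => -S / 2) w =
        2 * (-S / 2) ^ 3 + (2 / 3) * x₀ * (-S / 2) - 2 / 3) := by
  have factor := boutrouxQuartic_eq_mul h1 h2
  have root : boutrouxQuartic x₀ (S ^ 2 * (S ^ 2 - Δ ^ 2) / 16) (-S / 2) = 0 := by
    rw [factor]; ring
  have critical : 4 * (-S / 2) ^ 3 + (4 / 3) * x₀ * (-S / 2) - 4 / 3 = 0 := by
    have double : HasDerivAt (boutrouxQuartic x₀ (S ^ 2 * (S ^ 2 - Δ ^ 2) / 16)) 0 (-S / 2) := by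
      have hf : boutrouxQuartic x₀ (S ^ 2 * (S ^ 2 - Δ ^ 2) / 16) =
          fun z => (z - (S - Δ) / 2) * (z - (S + Δ) / 2) * (z - -S / 2) ^ 2 :=
        funext fun z => by rw [factor]; ring
      rw [hf]
      exact hasDerivAt_mul_sub_sq_self (by fun_prop)
    exact (hasDerivAt_boutrouxQuartic _ _ _).unique double
  have cubic : 2 * (-S / 2) ^ 3 + (2 / 3) * x₀ * (-S / 2) - 2 / 3 = 0 := by
    linear_combination critical / 2
  refine ⟨by linear_combination -12 * cubic, factor, ⟨root, critical⟩, cubic, fun _ => ?_, fun _ => ?_⟩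
  · rw [deriv_const', ← boutrouxQuartic, root, zero_pow two_ne_zero]
  · rw [cubic]; simp
end

section
/- Let a, b, x ∈ ℂ and set S := a + b and Δ := b − a, and assume the genus-zero moment conditions 6·S² + 3·Δ² = −8·x and 3·S·Δ² = 16. Let R₀ > max(|a|, |b|) and let r be an analytic function on {z ∈ ℂ : |z| > R₀} satisfying r(z)² = (z − a)·(z − b) for all such z and r(z)/z → 1 as z → ∞. Then the function g'(z) := (3/2)·z² + (1/2)·x − (3/2)·(z + S/2)·r(z) satisfies g'(z) − 1/z = O(|z|⁻²) as z → ∞. -/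
/-!
Multiply `g'(z) - 1/z = (P(z) - 1/z) - Q(z) r(z)`, where `P(z) = (3/2)z² + x/2` and
`Q(z) = (3/2)(z + S/2)`, by its conjugate `(P(z) - 1/z) + Q(z) r(z)`. Since `r² = (z - a)(z - b)`,
the product is `(P - 1/z)² - Q²(z - a)(z - b)`, and the two moment conditions are exactly what
kills its terms of positive degree in `z`, so it stays bounded. The conjugate grows like `3z²`
because `r(z) ~ z`, hence `g'(z) - 1/z = O(z⁻²)`.
-/

open Filter Asymptotics Topology

theorem Asymptotics.isBigO_inv_of_mul_eventuallyEq {α 𝕜 : Type*} [NormedField 𝕜]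
    {l : Filter α} {f h n g : α → 𝕜} (hfh : ∀ᶠ x in l, f x * h x = n x)
    (hn : n =O[l] fun _ => (1 : 𝕜)) (hgh : g =O[l] h) (hg : ∀ᶠ x in l, g x ≠ 0) :
    f =O[l] fun x => (g x)⁻¹ := by
  have hh : ∀ᶠ x in l, h x ≠ 0 := by
    filter_upwards [hgh.eq_zero_imp, hg] with x himp hgx hhx using hgx (himp hhx)
  have hf : f =ᶠ[l] fun x => n x * (h x)⁻¹ := by
    filter_upwards [hfh, hh] with x hx hhx
    rw [← hx, mul_inv_cancel_right₀ hhx]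
  refine (hn.mul (hgh.inv_rev (hg.mono fun x hx h0 => absurd h0 hx))).congr' hf.symm ?_
  simp only [one_mul, EventuallyEq.rfl]

theorem tendsto_inv_cocompact_nhds_zero {𝕜 : Type*} [NormedField 𝕜] [ProperSpace 𝕜] :
    Tendsto (fun z : 𝕜 => z⁻¹) (cocompact 𝕜) (𝓝 0) :=
  Metric.cobounded_eq_cocompact (α := 𝕜) ▸ tendsto_inv₀_cobounded

theorem genus_zero_mul_conj {a b x z w : ℂ}
    (h1 : 6 * (a + b) ^ 2 + 3 * (b - a) ^ 2 = -8 * x)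
    (h2 : 3 * (a + b) * (b - a) ^ 2 = 16) (hz : z ≠ 0) (hw : w ^ 2 = (z - a) * (z - b)) :
    ((3 / 2 * z ^ 2 + 1 / 2 * x - 3 / 2 * (z + (a + b) / 2) * w) - 1 / z) *
        ((3 / 2 * z ^ 2 + 1 / 2 * x - 1 / z) + 3 / 2 * (z + (a + b) / 2) * w) =
      x ^ 2 / 4 - 9 / 16 * (a + b) ^ 2 * (a * b) - x * z⁻¹ + z⁻¹ ^ 2 := by
  field_simp
  linear_combination (192 * z ^ 4) * h1 + (192 * z ^ 3) * h2 -
    (576 * z ^ 2 * (2 * z + a + b) ^ 2) * hw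

theorem tendsto_genus_zero_conj_div_sq (a b x : ℂ) {r : ℂ → ℂ}
    (hlim : Tendsto (fun z : ℂ => r z / z) (cocompact ℂ) (𝓝 1)) :
    Tendsto (fun z =>
        ((3 / 2 * z ^ 2 + 1 / 2 * x - 1 / z) + 3 / 2 * (z + (a + b) / 2) * r z) / z ^ 2)
      (cocompact ℂ) (𝓝 3) := by
  have hcont : Continuous fun p : ℂ × ℂ =>
      3 / 2 + x / 2 * p.1 ^ 2 - p.1 ^ 3 + 3 / 2 * (1 + (a + b) / 2 * p.1) * p.2 := by
    fun_prop
  have hlim' := (hcont.tendsto (0, 1)).comp (tendsto_inv_cocompact_nhds_zero.prodMk_nhds hlim)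
  norm_num at hlim'
  refine hlim'.congr' ?_
  filter_upwards [tendsto_norm_cocompact_atTop.eventually_gt_atTop 0] with z hz
  have hz : z ≠ 0 := norm_pos_iff.mp hz
  simp only [Function.comp_apply]
  field_simp

theorem genus_zero_gprime_asymptotics_general (a b x : ℂ)
    (h1 : 6 * (a + b) ^ 2 + 3 * (b - a) ^ 2 = -8 * x)
    (h2 : 3 * (a + b) * (b - a) ^ 2 = 16)
    (R₀ : ℝ)
    (r : ℂ → ℂ)
    (hr2 : ∀ z : ℂ, R₀ < ‖z‖ → r z ^ 2 = (z - a) * (z - b))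
    (hlim : Tendsto (fun z : ℂ => r z / z) (cocompact ℂ) (nhds 1)) :
    (fun z : ℂ =>
        ((3 / 2) * z ^ 2 + (1 / 2) * x - (3 / 2) * (z + (a + b) / 2) * r z) - 1 / z)
      =O[cocompact ℂ] fun z : ℂ => ‖z‖⁻¹ ^ 2 := by
  have hlarge : ∀ᶠ z : ℂ in cocompact ℂ, R₀ < ‖z‖ :=
    tendsto_norm_cocompact_atTop.eventually_gt_atTop R₀
  have hz : ∀ᶠ z : ℂ in cocompact ℂ, z ≠ 0 :=
    (tendsto_norm_cocompact_atTop.eventually_gt_atTop 0).mono fun _ => norm_pos_iff.mp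
  have hprod_bounded :
      (fun z : ℂ => x ^ 2 / 4 - 9 / 16 * (a + b) ^ 2 * (a * b) - x * z⁻¹ + z⁻¹ ^ 2)
        =O[cocompact ℂ] fun _ => (1 : ℂ) :=
    Tendsto.isBigO_one ℂ (c := x ^ 2 / 4 - 9 / 16 * (a + b) ^ 2 * (a * b)) <| by
      simpa using (tendsto_const_nhds.sub (tendsto_inv_cocompact_nhds_zero.const_mul x)).add
        (tendsto_inv_cocompact_nhds_zero.pow 2)
  have hsq_le_conj := isBigO_of_div_tendsto_nhds_of_ne_zero
    (tendsto_genus_zero_conj_div_sq a b x hlim) three_ne_zero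
  refine (isBigO_inv_of_mul_eventuallyEq ?_ hprod_bounded hsq_le_conj
    (hz.mono fun _ => pow_ne_zero 2)).norm_right.congr_right fun z => by simp [inv_pow]
  filter_upwards [hz, hlarge] with z hz hzR using genus_zero_mul_conj h1 h2 hz (hr2 z hzR)

/-- Let `S := a + b`, `Δ := b − a` satisfy the genus-zero moment conditions
`6S² + 3Δ² = −8x` and `3SΔ² = 16`, and let `r` be an analytic branch of
`√((z−a)(z−b))` on `|z| > R₀` with `r(z)/z → 1` as `z → ∞`.  Then
`g'(z) := (3/2)z² + (1/2)x − (3/2)(z + S/2)r(z)` satisfies `g'(z) − 1/z = O(|z|⁻²)`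
as `z → ∞`. -/
theorem genus_zero_gprime_asymptotics (a b x : ℂ)
    (h1 : 6 * (a + b) ^ 2 + 3 * (b - a) ^ 2 = -8 * x)
    (h2 : 3 * (a + b) * (b - a) ^ 2 = 16)
    (R₀ : ℝ) (hR₀ : max ‖a‖ ‖b‖ < R₀)
    (r : ℂ → ℂ) (hr : AnalyticOnNhd ℂ r {z : ℂ | R₀ < ‖z‖})
    (hr2 : ∀ z : ℂ, R₀ < ‖z‖ → r z ^ 2 = (z - a) * (z - b))
    (hlim : Tendsto (fun z : ℂ => r z / z) (cocompact ℂ) (nhds 1)) :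
    (fun z : ℂ =>
        ((3 / 2) * z ^ 2 + (1 / 2) * x - (3 / 2) * (z + (a + b) / 2) * r z) - 1 / z)
      =O[cocompact ℂ] fun z : ℂ => ‖z‖⁻¹ ^ 2 :=
  genus_zero_gprime_asymptotics_general a b x h1 h2 R₀ r hr2 hlim
end

section
/- Let A, B, C, D, x₀ ∈ ℂ satisfy the moment conditions M₁(A,B,C,D) = 0, M₂(A,B,C,D) = −(4/3)·x₀, and M₃(A,B,C,D) = 4. Let ρ > max(|A|,|B|,|C|,|D|) and let R be an analytic function on {z ∈ ℂ : |z| > ρ} satisfying R(z)² = (z−A)·(z−B)·(z−C)·(z−D) for all such z and R(z)/z² → 1 as z → ∞. Then the function G'(z) := (3/2)·z² + (1/2)·x₀ − (3/2)·R(z) satisfies G'(z) − 1/z = O(|z|⁻²) as z → ∞. -/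
/-!
With `S(z) := z² + x₀/3 − (2/3)/z`, the moment conditions (through Newton's identities) make
`S(z)² − (z−A)(z−B)(z−C)(z−D)` bounded at infinity: `S` is the Laurent expansion of the square
root of the quartic up to order `z⁻¹`. Since `S + R ~ 2z²`, the identity `S − R = (S² − R²)/(S + R)`
gives `S − R = O(|z|⁻²)`, and `G'(z) − 1/z = (3/2)(S(z) − R(z))`.
-/

open Filter Asymptotics Topology Bornology

theorem isBigO_sub_of_tendsto_add_div {α 𝕜 : Type*} [NormedField 𝕜] {l : Filter α}
    {f g w : α → 𝕜} {c : 𝕜} (hc : c ≠ 0) (h : Tendsto (fun x => (f x + g x) / w x) l (𝓝 c)) :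
    (fun x => f x - g x) =O[l] fun x => (f x ^ 2 - g x ^ 2) / w x := by
  have hbdd : (fun x => ((f x + g x) / w x)⁻¹) =O[l] fun _ => (1 : 𝕜) :=
    (h.inv₀ hc).isBigO_one 𝕜
  refine ((isBigO_refl (fun x => (f x ^ 2 - g x ^ 2) / w x) l).mul hbdd).congr' ?_
    (by simp only [mul_one]; rfl)
  filter_upwards [h.eventually_ne hc] with x hx
  obtain ⟨hfg, hw⟩ := div_ne_zero_iff.mp hx
  field_simp
  ring

theorem tendsto_sq_add_sub_inv_div_sq {𝕜 : Type*} [NormedField 𝕜] (a b : 𝕜) :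
    Tendsto (fun z => (z ^ 2 + a - b * z⁻¹) / z ^ 2) (cobounded 𝕜) (𝓝 1) := by
  have hinv := tendsto_inv₀_cobounded (α := 𝕜)
  have hlim : Tendsto (fun z : 𝕜 => 1 + a * z⁻¹ ^ 2 - b * z⁻¹ ^ 3) (cobounded 𝕜)
      (𝓝 (1 + a * 0 ^ 2 - b * 0 ^ 3)) :=
    (tendsto_const_nhds.add (tendsto_const_nhds.mul (hinv.pow 2))).sub
      (tendsto_const_nhds.mul (hinv.pow 3))
  refine (by simpa using hlim : Tendsto _ _ (𝓝 (1 : 𝕜))).congr' ?_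
  filter_upwards [eventually_ne_cobounded 0] with z hz
  field_simp

section Moments

variable {K : Type*} [Field K] [CharZero K] {A B C D x₀ : K}

theorem quartic_eq_of_moments (h1 : A + B + C + D = 0)
    (h2 : A ^ 2 + B ^ 2 + C ^ 2 + D ^ 2 = -(4 / 3) * x₀)
    (h3 : A ^ 3 + B ^ 3 + C ^ 3 + D ^ 3 = 4) (z : K) :
    (z - A) * (z - B) * (z - C) * (z - D) =
      z ^ 4 + 2 / 3 * x₀ * z ^ 2 - 4 / 3 * z + A * B * C * D := by
  have he2 : A * B + A * C + A * D + B * C + B * D + C * D = 2 / 3 * x₀ := by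
    linear_combination (A + B + C + D) / 2 * h1 - 1 / 2 * h2
  have he3 : A * B * C + A * B * D + A * C * D + B * C * D = 4 / 3 := by
    linear_combination 1 / 3 * h3
      + (3 * (A * B + A * C + A * D + B * C + B * D + C * D) - (A + B + C + D) ^ 2) / 3 * h1
  linear_combination -z ^ 3 * h1 + z ^ 2 * he2 - z * he3

theorem sq_sub_quartic_of_moments (h1 : A + B + C + D = 0)
    (h2 : A ^ 2 + B ^ 2 + C ^ 2 + D ^ 2 = -(4 / 3) * x₀)
    (h3 : A ^ 3 + B ^ 3 + C ^ 3 + D ^ 3 = 4) {z : K} (hz : z ≠ 0) :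
    (z ^ 2 + x₀ / 3 - 2 / 3 * z⁻¹) ^ 2 - (z - A) * (z - B) * (z - C) * (z - D) =
      x₀ ^ 2 / 9 - A * B * C * D - 4 / 9 * x₀ * z⁻¹ + 4 / 9 * z⁻¹ ^ 2 := by
  rw [quartic_eq_of_moments h1 h2 h3]
  field_simp
  ring

end Moments

theorem isBigO_sq_sub_quartic_of_moments {K : Type*} [NormedField K] [CharZero K]
    {A B C D x₀ : K} (h1 : A + B + C + D = 0)
    (h2 : A ^ 2 + B ^ 2 + C ^ 2 + D ^ 2 = -(4 / 3) * x₀)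
    (h3 : A ^ 3 + B ^ 3 + C ^ 3 + D ^ 3 = 4) :
    (fun z => (z ^ 2 + x₀ / 3 - 2 / 3 * z⁻¹) ^ 2 - (z - A) * (z - B) * (z - C) * (z - D))
      =O[cobounded K] fun _ => (1 : ℝ) := by
  have hinv := tendsto_inv₀_cobounded (α := K)
  have hlim : Tendsto
      (fun z : K => x₀ ^ 2 / 9 - A * B * C * D - 4 / 9 * x₀ * z⁻¹ + 4 / 9 * z⁻¹ ^ 2) (cobounded K)
      (𝓝 (x₀ ^ 2 / 9 - A * B * C * D - 4 / 9 * x₀ * 0 + 4 / 9 * 0 ^ 2)) :=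
    (tendsto_const_nhds.sub (tendsto_const_nhds.mul hinv)).add
      (tendsto_const_nhds.mul (hinv.pow 2))
  refine (hlim.isBigO_one ℝ).congr' ?_ EventuallyEq.rfl
  filter_upwards [eventually_ne_cobounded 0] with z hz
  exact (sq_sub_quartic_of_moments h1 h2 h3 hz).symm

theorem genus_one_Gprime_asymptotics_general (A B C D x₀ : ℂ)
    (h1 : A + B + C + D = 0)
    (h2 : A ^ 2 + B ^ 2 + C ^ 2 + D ^ 2 = -(4 / 3) * x₀)
    (h3 : A ^ 3 + B ^ 3 + C ^ 3 + D ^ 3 = 4)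
    (ρ : ℝ)
    (R : ℂ → ℂ)
    (hR2 : ∀ z : ℂ, ρ < ‖z‖ → R z ^ 2 = (z - A) * (z - B) * (z - C) * (z - D))
    (hlim : Tendsto (fun z : ℂ => R z / z ^ 2) (cocompact ℂ) (nhds 1)) :
    (fun z : ℂ => ((3 / 2) * z ^ 2 + (1 / 2) * x₀ - (3 / 2) * R z) - 1 / z)
      =O[cocompact ℂ] fun z : ℂ => ‖z‖⁻¹ ^ 2 := by
  rw [← Metric.cobounded_eq_cocompact] at hlim ⊢
  set S : ℂ → ℂ := fun z => z ^ 2 + x₀ / 3 - 2 / 3 * z⁻¹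
  have hsum : Tendsto (fun z => (S z + R z) / z ^ 2) (cobounded ℂ) (𝓝 2) := by
    have h := (tendsto_sq_add_sub_inv_div_sq (x₀ / 3) (2 / 3)).add hlim
    rw [one_add_one_eq_two] at h
    exact h.congr fun z => (add_div _ _ _).symm
  have hsq : (fun z => S z ^ 2 - R z ^ 2) =O[cobounded ℂ] fun _ => (1 : ℝ) := by
    refine (isBigO_sq_sub_quartic_of_moments h1 h2 h3).congr' ?_ EventuallyEq.rfl
    filter_upwards [tendsto_norm_cobounded_atTop.eventually_gt_atTop ρ] with z hz
    rw [hR2 z hz]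
  have hinv_sq : (fun z : ℂ => (z ^ 2)⁻¹) =O[cobounded ℂ] fun z => ‖z‖⁻¹ ^ 2 :=
    isBigO_of_le _ fun z => by simp
  calc (fun z => (3 / 2 * z ^ 2 + 1 / 2 * x₀ - 3 / 2 * R z) - 1 / z)
      = fun z => 3 / 2 * (S z - R z) := by funext z; simp only [S]; ring
    _ =O[cobounded ℂ] fun z => S z - R z := isBigO_const_mul_self _ _ _
    _ =O[cobounded ℂ] fun z => (S z ^ 2 - R z ^ 2) / z ^ 2 :=
      isBigO_sub_of_tendsto_add_div two_ne_zero hsum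
    _ =O[cobounded ℂ] fun z => ‖z‖⁻¹ ^ 2 := by
      simpa only [div_eq_mul_inv, one_mul] using hsq.mul hinv_sq

/-- Let `A, B, C, D, x₀ ∈ ℂ` satisfy the moment conditions `M₁ = 0`, `M₂ = −(4/3)x₀`,
`M₃ = 4` (with `M_p := A^p + B^p + C^p + D^p`), and let `R` be an analytic branch of
`√((z−A)(z−B)(z−C)(z−D))` on `|z| > ρ` with `R(z)/z² → 1` as `z → ∞`.  Then
`G'(z) := (3/2)z² + (1/2)x₀ − (3/2)R(z)` satisfies `G'(z) − 1/z = O(|z|⁻²)` as `z → ∞`. -/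
theorem genus_one_Gprime_asymptotics (A B C D x₀ : ℂ)
    (h1 : A + B + C + D = 0)
    (h2 : A ^ 2 + B ^ 2 + C ^ 2 + D ^ 2 = -(4 / 3) * x₀)
    (h3 : A ^ 3 + B ^ 3 + C ^ 3 + D ^ 3 = 4)
    (ρ : ℝ)
    (hρ : max (max ‖A‖ ‖B‖) (max ‖C‖ ‖D‖) < ρ)
    (R : ℂ → ℂ) (hR : AnalyticOnNhd ℂ R {z : ℂ | ρ < ‖z‖})
    (hR2 : ∀ z : ℂ, ρ < ‖z‖ → R z ^ 2 = (z - A) * (z - B) * (z - C) * (z - D))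
    (hlim : Tendsto (fun z : ℂ => R z / z ^ 2) (cocompact ℂ) (nhds 1)) :
    (fun z : ℂ => ((3 / 2) * z ^ 2 + (1 / 2) * x₀ - (3 / 2) * R z) - 1 / z)
      =O[cocompact ℂ] fun z : ℂ => ‖z‖⁻¹ ^ 2 :=
  genus_one_Gprime_asymptotics_general A B C D x₀ h1 h2 h3 ρ R hR2 hlim
end

section
/- Let x₀, A, B ∈ ℂ with A ≠ B, and suppose the quadruple (A, B, B, B) satisfies the moment conditions M₁ = 0, M₂ = −(4/3)·x₀, M₃ = 4 (i.e., a triple root B and a simple root A). Then A = −3·B, B³ = −1/6, x₀ = −9·B², and consequently x₀³ = −81/4, so x₀ is one of the three corner points −(81/4)^{1/3}·e^{−2πin/3}, n ∈ {0, 1, −1}, of the elliptic region. Conversely, for every B ∈ ℂ with B³ = −1/6, the quadruple (−3B, B, B, B) satisfies the moment conditions with x₀ = −9·B². -/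
/-!
The moment conditions for `(A, B, B, B)` are linear in `A` and `x₀` once `B` is fixed:
`M₁ = 0` forces `A = -3B`, after which `M₃ = -24 B³` and `M₂ = 12 B²`, so they are equivalent
to `B³ = -1/6` and `x₀ = -9B²`. Then `x₀³ = -729 B⁶ = -81/4`, and the three cube roots of
`-81/4` are the real one times the cube roots of unity.
-/

/-- The moments `M_p(A,B,C,D) := A^p + B^p + C^p + D^p`. -/
def moment (p : ℕ) (A B C D : ℂ) : ℂ := A ^ p + B ^ p + C ^ p + D ^ p

theorem moment_triple (p : ℕ) (A B : ℂ) : moment p A B B B = A ^ p + 3 * B ^ p := by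
  unfold moment
  ring

theorem moment_conditions_triple_iff (x₀ A B : ℂ) :
    (moment 1 A B B B = 0 ∧ moment 2 A B B B = -(4 / 3) * x₀ ∧ moment 3 A B B B = 4) ↔
      (A = -3 * B ∧ B ^ 3 = -1 / 6 ∧ x₀ = -9 * B ^ 2) := by
  simp only [moment_triple]
  constructor
  · rintro ⟨h₁, h₂, h₃⟩
    have hA : A = -3 * B := by linear_combination h₁
    subst hA
    exact ⟨rfl, by linear_combination (-1 / 24 : ℂ) * h₃, by linear_combination (3 / 4 : ℂ) * h₂⟩
  · rintro ⟨rfl, hB, rfl⟩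
    exact ⟨by ring, by ring, by linear_combination (-24 : ℂ) * hB⟩

theorem Complex.ofReal_rpow_one_div_three_pow_three {x : ℝ} (hx : 0 ≤ x) :
    ((x ^ ((1 : ℝ) / 3) : ℝ) : ℂ) ^ 3 = x := by
  have h := Real.rpow_inv_natCast_pow hx (n := 3) three_ne_zero
  rw [Nat.cast_ofNat, ← one_div] at h
  exact_mod_cast h

theorem Complex.eq_mul_exp_of_pow_three_eq {z w : ℂ} (hw : w ≠ 0) (h : z ^ 3 = w ^ 3) :
    ∃ n : ℤ, (n = 0 ∨ n = 1 ∨ n = -1) ∧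
      z = w * Complex.exp (-(2 * Real.pi * Complex.I * (n : ℂ)) / 3) := by
  set ζ := Complex.exp (2 * Real.pi * Complex.I / 3)
  have hζ : IsPrimitiveRoot ζ 3 := by
    simpa using Complex.isPrimitiveRoot_exp 3 three_ne_zero
  have hexp : ∀ n : ℤ, Complex.exp (-(2 * Real.pi * Complex.I * (n : ℂ)) / 3) = ζ ^ (-n) := by
    intro n
    rw [← Complex.exp_int_mul]
    push_cast
    ring_nf
  have hroot : (z / w) ^ 3 = 1 := by rw [div_pow, h, div_self (pow_ne_zero 3 hw)]
  obtain ⟨i, hi, hzw⟩ := hζ.eq_pow_of_pow_eq_one hroot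
  rw [eq_div_iff hw] at hzw
  interval_cases i
  · exact ⟨0, Or.inl rfl, by rw [hexp, ← hzw]; simp⟩
  · exact ⟨-1, Or.inr (Or.inr rfl), by rw [hexp, ← hzw]; simp [mul_comm]⟩
  · refine ⟨1, Or.inr (Or.inl rfl), ?_⟩
    have hinv : ζ ^ (-1 : ℤ) = ζ ^ 2 := by
      rw [zpow_neg_one]
      exact inv_eq_of_mul_eq_one_right (by rw [← pow_succ']; exact hζ.pow_eq_one)
    rw [hexp, ← hzw, hinv, mul_comm]

/-- Triple-root case of the moment conditions.  If `A ≠ B` and `(A,B,B,B)` satisfies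
`M₁ = 0`, `M₂ = −(4/3)x₀`, `M₃ = 4`, then `A = −3B`, `B³ = −1/6`, `x₀ = −9B²`, hence
`x₀³ = −81/4`, so `x₀` is one of the three corner points `−(81/4)^{1/3}e^{−2πin/3}`,
`n ∈ {0, 1, −1}`, of the elliptic region.  Conversely, for every `B` with `B³ = −1/6`,
the quadruple `(−3B, B, B, B)` satisfies the moment conditions with `x₀ = −9B²`. -/
theorem moment_conditions_triple_root :
    (∀ x₀ A B : ℂ, A ≠ B →
      moment 1 A B B B = 0 → moment 2 A B B B = -(4 / 3) * x₀ → moment 3 A B B B = 4 →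
      A = -3 * B ∧ B ^ 3 = -1 / 6 ∧ x₀ = -9 * B ^ 2 ∧ x₀ ^ 3 = -81 / 4 ∧
        ∃ n : ℤ, (n = 0 ∨ n = 1 ∨ n = -1) ∧
          x₀ = -((((81 / 4 : ℝ) ^ ((1 : ℝ) / 3) : ℝ) : ℂ) *
            Complex.exp (-(2 * Real.pi * Complex.I * (n : ℂ)) / 3))) ∧
    (∀ B : ℂ, B ^ 3 = -1 / 6 →
      moment 1 (-3 * B) B B B = 0 ∧
        moment 2 (-3 * B) B B B = -(4 / 3) * (-9 * B ^ 2) ∧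
        moment 3 (-3 * B) B B B = 4) := by
  refine ⟨fun x₀ A B _ h₁ h₂ h₃ => ?_, fun B hB =>
    (moment_conditions_triple_iff (-9 * B ^ 2) (-3 * B) B).2 ⟨rfl, hB, rfl⟩⟩
  obtain ⟨hA, hB, hx⟩ := (moment_conditions_triple_iff x₀ A B).1 ⟨h₁, h₂, h₃⟩
  have hx₃ : x₀ ^ 3 = -81 / 4 := by
    rw [hx]
    linear_combination (-729 * B ^ 3 + 729 / 6 : ℂ) * hB
  refine ⟨hA, hB, hx, hx₃, ?_⟩
  set c : ℂ := (((81 / 4 : ℝ) ^ ((1 : ℝ) / 3) : ℝ) : ℂ)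
  have hc : c ^ 3 = 81 / 4 := by
    rw [Complex.ofReal_rpow_one_div_three_pow_three (by norm_num)]
    push_cast
    ring
  have hc₀ : c ≠ 0 := by
    rintro h
    norm_num [h] at hc
  obtain ⟨n, hn, hx₀⟩ :=
    Complex.eq_mul_exp_of_pow_three_eq (neg_ne_zero.2 hc₀) (by rw [hx₃, neg_pow, hc]; norm_num)
  exact ⟨n, hn, by rw [hx₀, neg_mul]⟩
end

section
/- Let x₀, A, B, C ∈ ℂ and suppose the quadruple (A, B, C, C) satisfies the moment conditions M₁ = 0, M₂ = −(4/3)·x₀, M₃ = 4 (i.e., C is a double root). Then, writing S := A + B and Δ := B − A, one has C = −S/2 and the genus-zero relations 6·S² + 3·Δ² = −8·x₀ and 3·S·Δ² = 16 hold; in particular S satisfies the cubic equation 3·S³ + 4·x₀·S + 8 = 0. -/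
theorem moment_one_eq_zero_iff (A B C : ℂ) : moment 1 A B C C = 0 ↔ C = -(A + B) / 2 := by
  unfold moment
  constructor
  · intro h
    linear_combination h / 2
  · rintro rfl
    ring

theorem moment_two_double_root (A B : ℂ) :
    moment 2 A B (-(A + B) / 2) (-(A + B) / 2) = (A + B) ^ 2 + (B - A) ^ 2 / 2 := by
  unfold moment
  ring

theorem moment_three_double_root (A B : ℂ) :
    moment 3 A B (-(A + B) / 2) (-(A + B) / 2) = 3 / 4 * (A + B) * (B - A) ^ 2 := by
  unfold moment
  ring

theorem cubic_of_genus_zero_relations {x₀ S Δ : ℂ} (h₂ : 6 * S ^ 2 + 3 * Δ ^ 2 = -8 * x₀)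
    (h₃ : 3 * S * Δ ^ 2 = 16) : 3 * S ^ 3 + 4 * x₀ * S + 8 = 0 := by
  linear_combination (S * h₂ - h₃) / 2

/-- Double-root case of the moment conditions.  If `(A,B,C,C)` satisfies `M₁ = 0`,
`M₂ = −(4/3)x₀`, `M₃ = 4`, then with `S := A + B` and `Δ := B − A` one has `C = −S/2`,
the genus-zero relations `6S² + 3Δ² = −8x₀` and `3SΔ² = 16`, and the cubic
`3S³ + 4x₀S + 8 = 0`. -/
theorem moment_conditions_double_root (x₀ A B C : ℂ)
    (h1 : moment 1 A B C C = 0)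
    (h2 : moment 2 A B C C = -(4 / 3) * x₀)
    (h3 : moment 3 A B C C = 4) :
    C = -(A + B) / 2 ∧
      6 * (A + B) ^ 2 + 3 * (B - A) ^ 2 = -8 * x₀ ∧
      3 * (A + B) * (B - A) ^ 2 = 16 ∧
      3 * (A + B) ^ 3 + 4 * x₀ * (A + B) + 8 = 0 := by
  obtain rfl := (moment_one_eq_zero_iff A B C).mp h1
  rw [moment_two_double_root] at h2
  rw [moment_three_double_root] at h3
  have genus_zero₂ : 6 * (A + B) ^ 2 + 3 * (B - A) ^ 2 = -8 * x₀ := by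
    linear_combination 6 * h2
  have genus_zero₃ : 3 * (A + B) * (B - A) ^ 2 = 16 := by
    linear_combination 4 * h3
  exact ⟨rfl, genus_zero₂, genus_zero₃, cubic_of_genus_zero_relations genus_zero₂ genus_zero₃⟩
end

section
/- Let A, B, C, D ∈ ℂ satisfy A + B + C + D = 0 and A³ + B³ + C³ + D³ = 4. Then A + B ≠ C + D. Moreover, if in addition A, B, C, D are pairwise distinct, then the point z_Q := (A·B − C·D)/(A + B − C − D) is well defined and is distinct from each of A, B, C, and D. -/
/-! If `A + B = C + D` while `A + B + C + D = 0`, both pair sums vanish and the cubes cancel in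
pairs, contradicting the third moment condition. Given the denominator is nonzero,
`z_Q - A = -(A - C)(A - D) / (A + B - C - D)`, and the other three cases follow from the
symmetries `z_Q(A, B, C, D) = z_Q(B, A, C, D) = z_Q(C, D, A, B)`. -/

section

variable {K : Type*} [Field K]

theorem sum_cubes_eq_zero_of_add_eq_add {A B C D : K} (h2 : (2 : K) ≠ 0)
    (h1 : A + B + C + D = 0) (h : A + B = C + D) : A ^ 3 + B ^ 3 + C ^ 3 + D ^ 3 = 0 := by
  have hAB : A + B = 0 :=
    (mul_eq_zero.mp (by linear_combination h1 + h : (2 : K) * (A + B) = 0)).resolve_left h2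
  have hCD : C + D = 0 :=
    (mul_eq_zero.mp (by linear_combination h1 - h : (2 : K) * (C + D) = 0)).resolve_left h2
  linear_combination (A ^ 2 - A * B + B ^ 2) * hAB + (C ^ 2 - C * D + D ^ 2) * hCD

def zQ (A B C D : K) : K := (A * B - C * D) / (A + B - C - D)

theorem zQ_swap_left (A B C D : K) : zQ B A C D = zQ A B C D := by
  simp only [zQ, mul_comm B A, add_comm B A]

theorem zQ_swap_pairs (A B C D : K) : zQ C D A B = zQ A B C D := by
  rw [zQ, zQ, ← neg_div_neg_eq]
  congr 1 <;> ring

theorem zQ_ne_left {A B C D : K} (hne : A + B ≠ C + D) (hAC : A ≠ C) (hAD : A ≠ D) :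
    zQ A B C D ≠ A := by
  have hden : A + B - C - D ≠ 0 := by rwa [sub_sub, sub_ne_zero]
  rw [zQ, Ne, div_eq_iff hden]
  intro h
  exact mul_ne_zero (sub_ne_zero.mpr hAC) (sub_ne_zero.mpr hAD)
    (by linear_combination -h : (A - C) * (A - D) = 0)

end

/-- Let `A, B, C, D ∈ ℂ` satisfy `A + B + C + D = 0` and `A³ + B³ + C³ + D³ = 4`.  Then
`A + B ≠ C + D`; moreover if `A, B, C, D` are pairwise distinct, the point
`z_Q := (AB − CD)/(A + B − C − D)` is well defined and distinct from each of
`A`, `B`, `C`, and `D`. -/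
theorem zQ_well_defined_and_distinct (A B C D : ℂ)
    (h1 : A + B + C + D = 0) (h3 : A ^ 3 + B ^ 3 + C ^ 3 + D ^ 3 = 4) :
    A + B ≠ C + D ∧
      (A ≠ B → A ≠ C → A ≠ D → B ≠ C → B ≠ D → C ≠ D →
        (A * B - C * D) / (A + B - C - D) ≠ A ∧
          (A * B - C * D) / (A + B - C - D) ≠ B ∧
          (A * B - C * D) / (A + B - C - D) ≠ C ∧
          (A * B - C * D) / (A + B - C - D) ≠ D) := by
  have hne : A + B ≠ C + D := fun h => by
    have := h3.symm.trans (sum_cubes_eq_zero_of_add_eq_add two_ne_zero h1 h)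
    norm_num at this
  refine ⟨hne, fun _ hAC hAD hBC hBD _ => ?_⟩
  show zQ A B C D ≠ A ∧ zQ A B C D ≠ B ∧ zQ A B C D ≠ C ∧ zQ A B C D ≠ D
  refine ⟨?_, ?_, ?_, ?_⟩
  · exact zQ_ne_left hne hAC hAD
  · rw [← zQ_swap_left]
    exact zQ_ne_left (by rwa [add_comm B A]) hBC hBD
  · rw [← zQ_swap_pairs]
    exact zQ_ne_left hne.symm hAC.symm hBC.symm
  · rw [← zQ_swap_pairs, ← zQ_swap_left]
    exact zQ_ne_left (by rwa [add_comm D C, ne_comm]) hAD.symm hBD.symm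
end

section
/- For all complex numbers A, B, C, D, the determinant of the 4×4 matrix with rows (1, 1, 1, 1), (2A, 2B, 2C, 2D), (3A², 3B², 3C², 3D²), and (BCD, ACD, ABD, ABC) equals −6·(A−B)·(A−C)·(B−C)·(A−D)·(B−D)·(C−D). In particular, this determinant is nonzero if and only if A, B, C, D are pairwise distinct. -/
/-! Each entry of the last row is a cubic in its own variable: by Vieta,
`b c d = e₃ - e₂ a + e₁ a² - a³` with `eₖ` the elementary symmetric functions of `a, b, c, d`.
So the Jacobian is a lower triangular matrix with diagonal `1, 2, 3, -1` times the (transposed)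
Vandermonde matrix of `a, b, c, d`, and its determinant is `-6` times the Vandermonde determinant. -/

section

variable {R : Type*} [CommRing R]

def momentJacobian (a b c d : R) : Matrix (Fin 4) (Fin 4) R :=
  !![1, 1, 1, 1;
     2 * a, 2 * b, 2 * c, 2 * d;
     3 * a ^ 2, 3 * b ^ 2, 3 * c ^ 2, 3 * d ^ 2;
     b * c * d, a * c * d, a * b * d, a * b * c]

def momentJacobianVietaFactor (a b c d : R) : Matrix (Fin 4) (Fin 4) R :=
  !![1, 0, 0, 0;
     0, 2, 0, 0;
     0, 0, 3, 0;
     a * b * c + a * b * d + a * c * d + b * c * d,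
       -(a * b + a * c + a * d + b * c + b * d + c * d), a + b + c + d, -1]

theorem momentJacobian_eq_vietaFactor_mul_vandermonde (a b c d : R) :
    momentJacobian a b c d =
      momentJacobianVietaFactor a b c d * (Matrix.vandermonde ![a, b, c, d]).transpose := by
  ext i j
  fin_cases i <;> fin_cases j <;>
    simp [momentJacobian, momentJacobianVietaFactor, Matrix.mul_apply, Fin.sum_univ_four] <;>
    ring

theorem det_momentJacobianVietaFactor (a b c d : R) :
    (momentJacobianVietaFactor a b c d).det = -6 := by
  simp [momentJacobianVietaFactor, Matrix.det_succ_row_zero, Fin.sum_univ_succ, Fin.succAbove]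
  norm_num

theorem det_momentJacobian (a b c d : R) :
    (momentJacobian a b c d).det =
      -6 * (a - b) * (a - c) * (b - c) * (a - d) * (b - d) * (c - d) := by
  rw [momentJacobian_eq_vietaFactor_mul_vandermonde, Matrix.det_mul, Matrix.det_transpose,
    Matrix.det_vandermonde, det_momentJacobianVietaFactor]
  simp [Fin.prod_univ_succ, Fin.prod_Ioi_succ]
  ring

theorem neg_six_mul_sub_prod_ne_zero_iff [NoZeroDivisors R] (h6 : (6 : R) ≠ 0) (a b c d : R) :
    -6 * (a - b) * (a - c) * (b - c) * (a - d) * (b - d) * (c - d) ≠ 0 ↔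
      (a ≠ b ∧ a ≠ c ∧ a ≠ d ∧ b ≠ c ∧ b ≠ d ∧ c ≠ d) := by
  simp only [ne_eq, mul_eq_zero, neg_eq_zero, h6, sub_eq_zero, false_or, not_or]
  tauto

end

/-- The Jacobian determinant `∂(M₁, M₂, M₃, Π)/∂(A, B, C, D)` of the moment map equals
`−6(A−B)(A−C)(B−C)(A−D)(B−D)(C−D)`; in particular it is nonzero iff `A, B, C, D` are
pairwise distinct. -/
theorem moment_jacobian_det (A B C D : ℂ) :
    Matrix.det
        !![1, 1, 1, 1;
           2 * A, 2 * B, 2 * C, 2 * D;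
           3 * A ^ 2, 3 * B ^ 2, 3 * C ^ 2, 3 * D ^ 2;
           B * C * D, A * C * D, A * B * D, A * B * C] =
      -6 * (A - B) * (A - C) * (B - C) * (A - D) * (B - D) * (C - D) ∧
    (Matrix.det
        !![1, 1, 1, 1;
           2 * A, 2 * B, 2 * C, 2 * D;
           3 * A ^ 2, 3 * B ^ 2, 3 * C ^ 2, 3 * D ^ 2;
           B * C * D, A * C * D, A * B * D, A * B * C] ≠ 0 ↔
      (A ≠ B ∧ A ≠ C ∧ A ≠ D ∧ B ≠ C ∧ B ≠ D ∧ C ≠ D)) := by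
  have hdet := det_momentJacobian A B C D
  refine ⟨hdet, ?_⟩
  rw [momentJacobian] at hdet
  rw [hdet]
  exact neg_six_mul_sub_prod_ne_zero_iff (by norm_num) A B C D
end
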